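/- arXiv:1201.5156 — 12 statements merged into one kernel-verified Lean document; each statement's English description precedes it below -/
import Mathlib

section
/- There is no positive function φ : ℕ → (0,∞) that serves as a universal boundary test for positive series with monotone terms; that is, there is no function φ with φ(n) > 0 for all n such that for every nonincreasing sequence (aₙ) of positive real numbers, the series ∑ aₙ converges if and only if φ(n)·aₙ → 0 as n → ∞. -/
open Filter Topology Finset

/-!
Given `φ`, let `M` be the running maximum of `φ` and `m = 1 / M`: a positive nonincreasing
sequence with `φ n * m n ≤ 1`. If `∑ m` converged, the test would give `φ n * m n → 0`, so
eventually `φ n < M n`; then `M` is eventually constant and `m` does not tend to `0`. Hence `∑ m`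
diverges, and so does its Abel–Dini transform `m n / (m 0 + ⋯ + m n)` (still positive and
nonincreasing), although `φ` times it is at most `1 / (m 0 + ⋯ + m n) → 0`.
-/

noncomputable def abelDini (a : ℕ → ℝ) (n : ℕ) : ℝ :=
  a n / ∑ k ∈ range (n + 1), a k

section AbelDini

variable {a : ℕ → ℝ}

lemma sum_range_succ_pos (ha : ∀ n, 0 < a n) (n : ℕ) : 0 < ∑ k ∈ range (n + 1), a k :=
  sum_pos (fun k _ => ha k) nonempty_range_add_one

lemma abelDini_pos (ha : ∀ n, 0 < a n) (n : ℕ) : 0 < abelDini a n :=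
  div_pos (ha n) (sum_range_succ_pos ha n)

lemma antitone_abelDini (ha : ∀ n, 0 < a n) (ha' : Antitone a) : Antitone (abelDini a) :=
  fun _ _ hij => div_le_div₀ (ha _).le (ha' hij) (sum_range_succ_pos ha _)
    (sum_le_sum_of_subset_of_nonneg (range_subset_range.2 (by omega)) fun k _ _ => (ha k).le)

lemma sum_Ico_div_le_sum_Ico_abelDini (ha : ∀ n, 0 < a n) {N M : ℕ} :
    (∑ k ∈ Ico N M, a k) / ∑ k ∈ range M, a k ≤ ∑ k ∈ Ico N M, abelDini a k := by
  rw [sum_div]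
  refine sum_le_sum fun k hk => div_le_div_of_nonneg_left (ha k).le (sum_range_succ_pos ha k) ?_
  exact sum_le_sum_of_subset_of_nonneg (range_subset_range.2 (by simp at hk; omega))
    fun k _ _ => (ha k).le

theorem not_summable_abelDini (ha : ∀ n, 0 < a n) (h : ¬ Summable a) :
    ¬ Summable (abelDini a) := by
  intro hc
  obtain ⟨N, hN⟩ :=
    Metric.cauchySeq_iff'.1 hc.hasSum.tendsto_sum_nat.cauchySeq (1 / 2) one_half_pos
  have hS : Tendsto (fun n => ∑ k ∈ range n, a k) atTop atTop :=
    (not_summable_iff_tendsto_nat_atTop_of_nonneg fun n => (ha n).le).1 h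
  obtain ⟨M, hM, hNM⟩ := ((hS.eventually_gt_atTop (2 * ∑ k ∈ range N, a k)).and
    (eventually_ge_atTop N)).exists
  have hSM : 0 < ∑ k ∈ range M, a k := by
    have := sum_nonneg fun k (_ : k ∈ range N) => (ha k).le
    linarith
  have hhalf : 1 / 2 < (∑ k ∈ Ico N M, a k) / ∑ k ∈ range M, a k := by
    rw [sum_Ico_eq_sub _ hNM, lt_div_iff₀ hSM]
    linarith
  have hsmall : ∑ k ∈ Ico N M, abelDini a k < 1 / 2 := by
    have := hN M hNM
    rwa [Real.dist_eq, ← sum_Ico_eq_sub _ hNM,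
      abs_of_nonneg (sum_nonneg fun k _ => (abelDini_pos ha k).le)] at this
  linarith [sum_Ico_div_le_sum_Ico_abelDini ha (N := N) (M := M)]

lemma tendsto_mul_abelDini_zero {φ : ℕ → ℝ} (ha : ∀ n, 0 < a n) (h : ¬ Summable a)
    (hφ : ∀ n, 0 ≤ φ n) {C : ℝ} (hC : ∀ n, φ n * a n ≤ C) :
    Tendsto (fun n => φ n * abelDini a n) atTop (𝓝 0) := by
  have hS : Tendsto (fun n => ∑ k ∈ range (n + 1), a k) atTop atTop :=
    ((not_summable_iff_tendsto_nat_atTop_of_nonneg fun n => (ha n).le).1 h).comp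
      (tendsto_add_atTop_nat 1)
  refine squeeze_zero (fun n => mul_nonneg (hφ n) (abelDini_pos ha n).le) (fun n => ?_)
    ((tendsto_const_nhds (x := C)).div_atTop hS)
  rw [abelDini, ← mul_div_assoc]
  exact div_le_div_of_nonneg_right (hC n) (sum_range_succ_pos ha n).le

end AbelDini

lemma exists_partialSups_eq_of_eventually_lt {α : Type*} [LinearOrder α] {f : ℕ → α}
    (h : ∀ᶠ n in atTop, f n < partialSups f n) :
    ∃ N, ∀ n ≥ N, partialSups f n = partialSups f N := by
  obtain ⟨N, hN⟩ := eventually_atTop.1 h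
  refine ⟨N, fun n hn => ?_⟩
  induction n, hn using Nat.le_induction with
  | base => rfl
  | succ n hn ih =>
    have hlt := hN (n + 1) (by omega)
    rw [partialSups_add_one, lt_sup_iff, lt_self_iff_false, or_false] at hlt
    rw [partialSups_add_one, sup_eq_left.2 hlt.le, ih]

lemma not_summable_inv_partialSups {φ : ℕ → ℝ} (hφ : ∀ n, 0 < φ n)
    (hlim : Tendsto (fun n => φ n * (partialSups φ n)⁻¹) atTop (𝓝 0)) :
    ¬ Summable fun n => (partialSups φ n)⁻¹ := by
  intro hs
  have hlt : ∀ᶠ n in atTop, φ n < partialSups φ n := by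
    filter_upwards [hlim.eventually_lt_const one_pos] with n hn
    have hM := (hφ n).trans_le (le_partialSups φ n)
    rwa [← div_eq_mul_inv, div_lt_one hM] at hn
  obtain ⟨N, hN⟩ := exists_partialSups_eq_of_eventually_lt hlt
  have hconst : Tendsto (fun n => (partialSups φ n)⁻¹) atTop (𝓝 (partialSups φ N)⁻¹) :=
    tendsto_atTop_of_eventually_const fun n hn => by rw [hN n hn]
  exact (inv_pos.2 ((hφ N).trans_le (le_partialSups φ N))).ne'
    (tendsto_nhds_unique hconst hs.tendsto_atTop_zero)

/-- Abel's first lemma: there is no positive function `φ` such that, for every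
nonincreasing sequence of positive reals `a`, the series `∑ a n` converges iff
`φ n * a n → 0`. -/
theorem no_universal_boundary_test :
    ¬ ∃ φ : ℕ → ℝ, (∀ n, 0 < φ n) ∧
      ∀ a : ℕ → ℝ, (∀ n, 0 < a n) → Antitone a →
        (Summable a ↔ Tendsto (fun n => φ n * a n) atTop (𝓝 0)) := by
  rintro ⟨φ, hφ, h⟩
  set m : ℕ → ℝ := fun n => (partialSups φ n)⁻¹
  have hM : ∀ n, 0 < partialSups φ n := fun n => (hφ n).trans_le (le_partialSups φ n)
  have hm : ∀ n, 0 < m n := fun n => inv_pos.2 (hM n)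
  have hm_anti : Antitone m := fun _ _ hij => inv_anti₀ (hM _) (partialSups_monotone φ hij)
  have hm_div : ¬ Summable m := fun hs =>
    not_summable_inv_partialSups hφ ((h m hm hm_anti).1 hs) hs
  have hφm : ∀ n, φ n * m n ≤ 1 := fun n => by
    rw [← div_eq_mul_inv, div_le_one (hM n)]
    exact le_partialSups φ n
  have hc : Summable (abelDini m) :=
    (h _ (abelDini_pos hm) (antitone_abelDini hm hm_anti)).2 <|
      tendsto_mul_abelDini_zero hm hm_div (fun n => (hφ n).le) hφm
  exact not_summable_abelDini hm hm_div hc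
end

section
/- If (aₙ)ₙ≥1 is a sequence of positive real numbers such that the series ∑ aₙ diverges, and Sₙ = a₁ + a₂ + ⋯ + aₙ denotes its partial sums, then the series ∑ (aₙ / Sₙ) also diverges. -/
/-!
If `∑ aₙ / Sₙ` converged, its blocks `∑_{N ≤ k ≤ m} aₖ / Sₖ` would become small. But `Sₖ ≤ Sₘ`
on such a block bounds it below by `(Sₘ - S_{N-1}) / Sₘ = 1 - S_{N-1} / Sₘ`, which tends to `1`
as `m → ∞` because `Sₘ → ∞`.
-/

open Filter Finset

theorem one_sub_div_le_sum_Ico_div_partialSum {a : ℕ → ℝ} (ha : ∀ n, 0 ≤ a n) {N m : ℕ}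
    (hNm : N ≤ m) (hm : 0 < ∑ k ∈ range m, a k) :
    1 - (∑ k ∈ range N, a k) / ∑ k ∈ range m, a k ≤
      ∑ k ∈ Ico N m, a k / ∑ j ∈ range (k + 1), a j := by
  calc 1 - (∑ k ∈ range N, a k) / ∑ k ∈ range m, a k
      = ∑ k ∈ Ico N m, a k / ∑ j ∈ range m, a j := by
        rw [← sum_div, sum_Ico_eq_sub _ hNm, sub_div, div_self hm.ne']
    _ ≤ ∑ k ∈ Ico N m, a k / ∑ j ∈ range (k + 1), a j := by
        refine sum_le_sum fun k hk => ?_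
        rcases (ha k).eq_or_lt with hak | hak
        · simp [← hak]
        have hkm : k + 1 ≤ m := (mem_Ico.1 hk).2
        exact div_le_div_of_nonneg_left (ha k)
          (hak.trans_le (single_le_sum (fun j _ => ha j) (self_mem_range_succ k)))
          (sum_le_sum_of_subset_of_nonneg (range_subset_range.2 hkm) fun j _ _ => ha j)

theorem not_summable_div_partialSum {a : ℕ → ℝ} (ha : ∀ n, 0 ≤ a n) (hdiv : ¬ Summable a) :
    ¬ Summable (fun n => a n / ∑ k ∈ range (n + 1), a k) := by
  intro hsum
  obtain ⟨N, hN⟩ :=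
    Metric.cauchySeq_iff'.1 hsum.hasSum.tendsto_sum_nat.cauchySeq (1 / 2) one_half_pos
  have hpartial := (not_summable_iff_tendsto_nat_atTop_of_nonneg ha).1 hdiv
  obtain ⟨m, hNm, hm_pos, hm_ratio⟩ : ∃ m, N ≤ m ∧ 0 < ∑ k ∈ range m, a k ∧
      (∑ k ∈ range N, a k) / ∑ k ∈ range m, a k < 1 / 2 :=
    ((eventually_ge_atTop N).and ((hpartial.eventually_gt_atTop 0).and
      ((hpartial.const_div_atTop _).eventually (gt_mem_nhds one_half_pos)))).exists
  have hblock := one_sub_div_le_sum_Ico_div_partialSum ha hNm hm_pos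
  rw [sum_Ico_eq_sub _ hNm] at hblock
  have hclose := (abs_sub_lt_iff.1 (Real.dist_eq _ _ ▸ hN m hNm)).1
  linarith

/-- Abel's second lemma: if `∑ a n` is a divergent positive series with partial
sums `S n = a 0 + ⋯ + a n`, then `∑ a n / S n` is also divergent. -/
theorem abel_divergent_quotient (a : ℕ → ℝ) (ha : ∀ n, 0 < a n)
    (hdiv : ¬ Summable a) :
    ¬ Summable (fun n => a n / ∑ k ∈ Finset.range (n + 1), a k) :=
  not_summable_div_partialSum (fun n => (ha n).le) hdiv
end

section
/- If (aₙ)ₙ≥1 is a sequence of positive real numbers such that the series ∑ aₙ converges and the sequence (n·aₙ)ₙ≥1 is nonincreasing, then (n·ln n)·aₙ → 0 as n → ∞. -/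
/-!
Since `i * a i ≥ n * a n` for `N < i ≤ n`, the block `∑_{N < i ≤ n} a i` is at least
`n * a n * (H n - H N) ≥ n * a n * (log n - log N - 1)`, and it is bounded by the tail
`∑_{i > N} a i`. Taking `N = ⌊√n⌋` gives `log n - log N - 1 ≥ log n / 2 - 1 ≥ log n / 4`
once `log n ≥ 4`, so `n * log n * a n` is at most four times a tail of a convergent series.
-/

open Filter Topology

open Finset

lemma sum_Ioc_le_tsum_nat_add {a : ℕ → ℝ} (ha : ∀ n, 0 ≤ a n) (hsum : Summable a) (N n : ℕ) :
    ∑ i ∈ Ioc N n, a i ≤ ∑' k, a (k + (N + 1)) := by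
  rw [← Ico_add_one_add_one_eq_Ioc, sum_Ico_eq_sum_range]
  simp_rw [add_comm (N + 1)]
  exact ((summable_nat_add_iff (N + 1)).2 hsum).sum_le_tsum _ fun k _ => ha _

lemma harmonic_sub_harmonic {N n : ℕ} (h : N ≤ n) :
    (harmonic n : ℝ) - harmonic N = ∑ i ∈ Ioc N n, (i : ℝ)⁻¹ := by
  have hIoc (m : ℕ) : (harmonic m : ℝ) = ∑ i ∈ Ioc 0 m, (i : ℝ)⁻¹ := by
    rw [harmonic_eq_sum_Icc, ← Icc_add_one_left_eq_Ioc]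
    push_cast
    rfl
  rw [sub_eq_iff_eq_add', hIoc, hIoc, sum_Ioc_consecutive _ N.zero_le h]

lemma log_sub_log_sub_one_le_sum_Ioc_inv {N n : ℕ} (h : N ≤ n) :
    Real.log n - Real.log N - 1 ≤ ∑ i ∈ Ioc N n, (i : ℝ)⁻¹ := by
  have hlow : Real.log n ≤ harmonic n := by
    rcases n.eq_zero_or_pos with rfl | hn
    · simp
    · refine (Real.log_le_log (by positivity) ?_).trans (log_add_one_le_harmonic n)
      push_cast
      linarith
  rw [← harmonic_sub_harmonic h]
  linarith [harmonic_le_one_add_log N]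

lemma mul_sum_Ioc_inv_le_sum_Ioc {a : ℕ → ℝ}
    (hanti : AntitoneOn (fun n : ℕ => (n : ℝ) * a n) (Set.Ici 1)) (N n : ℕ) :
    (n : ℝ) * a n * ∑ i ∈ Ioc N n, (i : ℝ)⁻¹ ≤ ∑ i ∈ Ioc N n, a i := by
  rw [mul_sum]
  refine sum_le_sum fun i hi => ?_
  obtain ⟨hNi, hin⟩ := mem_Ioc.1 hi
  have hi1 : 1 ≤ i := by omega
  rw [mul_inv_le_iff₀ (by exact_mod_cast hi1), mul_comm (a i)]
  exact hanti (Set.mem_Ici.2 hi1) (Set.mem_Ici.2 (hi1.trans hin)) hin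

lemma two_mul_log_sqrt_le_log (n : ℕ) : 2 * Real.log (Nat.sqrt n) ≤ Real.log n := by
  rcases (Nat.sqrt n).eq_zero_or_pos with h0 | hpos
  · simp [h0, Real.log_natCast_nonneg]
  · rw [← Nat.cast_ofNat, ← Real.log_pow]
    exact Real.log_le_log (by positivity) (by exact_mod_cast Nat.sqrt_le' n)

lemma natCast_mul_log_mul_le_four_mul_tsum_nat_add {a : ℕ → ℝ} (ha : ∀ n, 0 ≤ a n)
    (hanti : AntitoneOn (fun n : ℕ => (n : ℝ) * a n) (Set.Ici 1)) (hsum : Summable a)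
    {n : ℕ} (hn : 4 ≤ Real.log n) :
    (n : ℝ) * Real.log n * a n ≤ 4 * ∑' k, a (k + (Nat.sqrt n + 1)) := by
  have hN := Nat.sqrt_le_self n
  have hna : 0 ≤ (n : ℝ) * a n := mul_nonneg n.cast_nonneg (ha n)
  calc (n : ℝ) * Real.log n * a n
      ≤ 4 * ((n : ℝ) * a n * (Real.log n - Real.log (Nat.sqrt n) - 1)) := by
        nlinarith [two_mul_log_sqrt_le_log n]
    _ ≤ 4 * ((n : ℝ) * a n * ∑ i ∈ Ioc (Nat.sqrt n) n, (i : ℝ)⁻¹) := by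
        gcongr
        exact log_sub_log_sub_one_le_sum_Ioc_inv hN
    _ ≤ 4 * ∑' k, a (k + (Nat.sqrt n + 1)) := by
        gcongr
        exact (mul_sum_Ioc_inv_le_sum_Ioc hanti _ n).trans (sum_Ioc_le_tsum_nat_add ha hsum _ n)

/-- If `∑ a n` is a convergent positive series and `(n * a n)` is nonincreasing
(for `n ≥ 1`), then `(n * log n) * a n → 0`. -/
theorem olivier_log (a : ℕ → ℝ) (ha : ∀ n, 0 < a n)
    (hanti : ∀ m n : ℕ, 1 ≤ m → m ≤ n → (n : ℝ) * a n ≤ (m : ℝ) * a m)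
    (hsum : Summable a) :
    Tendsto (fun n : ℕ => ((n : ℝ) * Real.log n) * a n) atTop (𝓝 0) := by
  have ha' : ∀ n, 0 ≤ a n := fun n => (ha n).le
  have hanti' : AntitoneOn (fun n : ℕ => (n : ℝ) * a n) (Set.Ici 1) :=
    fun m hm n _ hmn => hanti m n hm hmn
  have htail : Tendsto (fun N => ∑' k, a (k + (N + 1))) atTop (𝓝 0) :=
    (tendsto_sum_nat_add a).comp (tendsto_add_atTop_nat 1)
  have hsqrt : Tendsto Nat.sqrt atTop atTop :=
    tendsto_atTop_atTop.2 fun b => ⟨b * b, fun n hn => Nat.le_sqrt.2 hn⟩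
  have hlog : ∀ᶠ n : ℕ in atTop, 4 ≤ Real.log n :=
    (Real.tendsto_log_atTop.comp tendsto_natCast_atTop_atTop).eventually_ge_atTop 4
  refine squeeze_zero' (Eventually.of_forall fun n => mul_nonneg (by positivity) (ha' n))
    (hlog.mono fun n hn => natCast_mul_log_mul_le_four_mul_tsum_nat_add ha' hanti' hsum hn) ?_
  simpa using (htail.comp hsqrt).const_mul 4
end

section
/- Suppose (aₙ)ₙ≥1 is a nonincreasing sequence of positive real numbers converging to 0, and (zₙ)ₙ≥1 is a sequence of complex numbers such that the series ∑ aₙ·zₙ converges. Then aₙ·(z₁ + z₂ + ⋯ + zₙ) → 0 as n → ∞. -/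
/-!
With `b n = (a n)⁻¹`, increasing to `∞`, this is Kronecker's lemma for the convergent series
`∑ x k`, `x k = a k * z k`. Abel summation turns `(b n)⁻¹ * ∑_{k ≤ n} b k * x k` into
`S (n + 1)` minus a mean of `S 1, …, S n` with the nonnegative weights `b (k + 1) - b k`
(`S m` the partial sums), and weighted means of a convergent sequence converge to its limit `L`.
-/

open Filter Topology Finset Asymptotics

section

variable {E : Type*} [NormedAddCommGroup E] [NormedSpace ℝ E]

theorem Filter.Tendsto.weighted_cesaro_smul {w : ℕ → ℝ} {u : ℕ → E} {l : E}
    (hu : Tendsto u atTop (𝓝 l)) (hw : 0 ≤ w)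
    (hW : Tendsto (fun n => ∑ i ∈ range n, w i) atTop atTop) :
    Tendsto (fun n => (∑ i ∈ range n, w i)⁻¹ • ∑ i ∈ range n, w i • u i) atTop (𝓝 l) := by
  have hsmall : (fun n => ∑ i ∈ range n, w i • (u i - l)) =o[atTop]
      fun n => ∑ i ∈ range n, w i := by
    refine IsLittleO.sum_range ?_ hw hW
    simpa using (isBigO_refl w atTop).smul_isLittleO
      ((isLittleO_one_iff ℝ).2 (tendsto_sub_nhds_zero_iff.2 hu))
  rw [← tendsto_sub_nhds_zero_iff]
  refine hsmall.tendsto_inv_smul_nhds_zero.congr' ?_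
  filter_upwards [hW.eventually_gt_atTop 0] with n hn
  simp [smul_sub, sum_sub_distrib, ← sum_smul, hn.ne']

theorem tendsto_inv_smul_sum_range_smul_of_tendsto_sum {b : ℕ → ℝ} {x : ℕ → E} {L : E}
    (hmono : Monotone b) (hb : Tendsto b atTop atTop)
    (hx : Tendsto (fun n => ∑ i ∈ range n, x i) atTop (𝓝 L)) :
    Tendsto (fun n => (b n)⁻¹ • ∑ i ∈ range (n + 1), b i • x i) atTop (𝓝 0) := by
  set S := fun n => ∑ i ∈ range n, x i
  have hincr_sum : ∀ n, ∑ i ∈ range n, (b (i + 1) - b i) = b n - b 0 := sum_range_sub b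
  have habel : ∀ n, ∑ i ∈ range (n + 1), b i • x i
      = b n • S (n + 1) - ∑ i ∈ range n, (b (i + 1) - b i) • S (i + 1) := fun n => by
    simpa using sum_range_by_parts b x (n + 1)
  have hS : Tendsto (fun n => S (n + 1)) atTop (𝓝 L) := hx.comp (tendsto_add_atTop_nat 1)
  have hb' : Tendsto (fun n => b n - b 0) atTop atTop := tendsto_atTop_add_const_right _ _ hb
  have hmean : Tendsto (fun n => (b n - b 0)⁻¹ • ∑ i ∈ range n, (b (i + 1) - b i) • S (i + 1))
      atTop (𝓝 L) := by
    simpa only [hincr_sum] using hS.weighted_cesaro_smul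
      (fun i => sub_nonneg.2 (hmono i.le_succ)) (by simpa only [hincr_sum] using hb')
  have hratio : Tendsto (fun n => (b n)⁻¹ * (b n - b 0)) atTop (𝓝 1) := by
    have := (tendsto_const_nhds (x := (1 : ℝ))).sub
      ((tendsto_inv_atTop_zero.comp hb).const_mul (b 0))
    rw [mul_zero, sub_zero] at this
    refine this.congr' ?_
    filter_upwards [hb.eventually_gt_atTop 0] with n hn
    simp [mul_sub, hn.ne', mul_comm]
  have := hS.sub (hratio.smul hmean)
  rw [one_smul, sub_self] at this
  refine this.congr' ?_
  filter_upwards [hb.eventually_gt_atTop 0, hb'.eventually_gt_atTop 0] with n hn hn'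
  rw [habel, smul_sub, inv_smul_smul₀ hn.ne', smul_smul, mul_assoc, mul_inv_cancel₀ hn'.ne',
    mul_one]

end

/-- Complex extension of Olivier's theorem: if `(a n)` is a nonincreasing
sequence of positive reals converging to `0` and `(z n)` is a sequence of
complex numbers such that the series `∑ a n * z n` converges, then
`a n * (z 0 + ⋯ + z n) → 0`. -/
theorem olivier_complex (a : ℕ → ℝ) (z : ℕ → ℂ)
    (ha : ∀ n, 0 < a n) (hanti : Antitone a)
    (hlim : Tendsto a atTop (𝓝 0))
    (hconv : ∃ L : ℂ, Tendsto (fun n => ∑ k ∈ Finset.range n, (a k : ℂ) * z k)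
      atTop (𝓝 L)) :
    Tendsto (fun n => (a n : ℂ) * ∑ k ∈ Finset.range (n + 1), z k)
      atTop (𝓝 0) := by
  obtain ⟨L, hL⟩ := hconv
  have hb_mono : Monotone fun n => (a n)⁻¹ := fun m n hmn => inv_anti₀ (ha n) (hanti hmn)
  have hb_top : Tendsto (fun n => (a n)⁻¹) atTop atTop :=
    tendsto_inv_nhdsGT_zero.comp (tendsto_nhdsWithin_iff.2 ⟨hlim, .of_forall ha⟩)
  refine (tendsto_inv_smul_sum_range_smul_of_tendsto_sum hb_mono hb_top hL).congr fun n => ?_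
  have hcancel : ∀ k, (a k)⁻¹ • ((a k : ℂ) * z k) = z k := fun k => by
    rw [Complex.real_smul, ← mul_assoc, ← Complex.ofReal_mul, inv_mul_cancel₀ (ha k).ne',
      Complex.ofReal_one, one_mul]
  simp only [hcancel, inv_inv, Complex.real_smul]
end

section
/- If (aₙ)ₙ≥1 is a sequence of positive real numbers such that the series ∑ aₙ converges, then the sequence (n·aₙ)ₙ converges in density to 0. -/
open Filter Topology

/-! Since `∑ aₙ` converges, there is a finite set `s` of indices such that every finite set of
indices disjoint from `s` carries total mass `< η` (Cauchy criterion). An index `k ≤ n` with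
`ε ≤ k aₖ` has `aₖ ≥ ε / n`, so fewer than `n η / ε` indices up to `n` outside `s` are such.
Taking `η = ε δ / 2` and `n` so large that `#s / n < δ / 2`, their proportion among `1, …, n`
is below `δ`. -/

open Finset

lemma card_mul_le_mul_sum_of_le_mul {a : ℕ → ℝ} (ha : ∀ k, 0 ≤ a k) {ε : ℝ} {n : ℕ}
    {T : Finset ℕ} (hT : ∀ k ∈ T, k ≤ n ∧ ε ≤ k * a k) :
    #T * ε ≤ n * ∑ k ∈ T, a k := by
  rw [mul_sum, ← nsmul_eq_mul, ← sum_const]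
  refine sum_le_sum fun k hk => (hT k hk).2.trans ?_
  gcongr
  · exact ha k
  · exact_mod_cast (hT k hk).1

/-- Šalát–Toma theorem: if `∑ a n` is a convergent positive series, then
`(n * a n)` converges in density to `0`: for every `ε > 0`, the set of indices
`k` with `k * a k ≥ ε` has zero (natural) density. -/
theorem salat_toma (a : ℕ → ℝ) (ha : ∀ n, 0 < a n) (hsum : Summable a) :
    ∀ ε > (0 : ℝ),
      Tendsto
        (fun n : ℕ =>
          (((Finset.Icc 1 n).filter (fun k : ℕ => ε ≤ (k : ℝ) * a k)).card : ℝ) / n)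
        atTop (𝓝 0) := by
  intro ε hε
  set F : ℕ → Finset ℕ := fun n => (Icc 1 n).filter (fun k : ℕ => ε ≤ (k : ℝ) * a k)
  refine tendsto_order.2 ⟨fun δ hδ => .of_forall fun n => hδ.trans_le (by positivity),
    fun δ hδ => ?_⟩
  obtain ⟨s, hs⟩ := hsum.vanishing (Iio_mem_nhds (by positivity : 0 < ε * (δ / 2)))
  filter_upwards [(tendsto_const_div_atTop_nhds_zero_nat (#s : ℝ)).eventually
    (gt_mem_nhds (half_pos hδ)), eventually_gt_atTop 0] with n hs_small hn
  have hn' : (0 : ℝ) < n := by exact_mod_cast hn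
  have hfar : (#(F n \ s) : ℝ) < n * (δ / 2) := by
    have htail : ∑ k ∈ F n \ s, a k < ε * (δ / 2) := hs _ sdiff_disjoint
    have hcount := card_mul_le_mul_sum_of_le_mul (fun k => (ha k).le) (n := n)
      (T := F n \ s) fun k hk => by
        obtain ⟨hk, hεk⟩ := mem_filter.1 (mem_sdiff.1 hk).1
        exact ⟨(mem_Icc.1 hk).2, hεk⟩
    refine lt_of_mul_lt_mul_right (a := ε) ?_ hε.le
    calc (#(F n \ s) : ℝ) * ε ≤ n * ∑ k ∈ F n \ s, a k := hcount
      _ < n * (ε * (δ / 2)) := by gcongr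
      _ = n * (δ / 2) * ε := by ring
  have hnear : (#s : ℝ) < n * (δ / 2) := by rwa [div_lt_iff₀ hn', mul_comm] at hs_small
  have hsplit : (#(F n) : ℝ) ≤ #(F n \ s) + #s := by exact_mod_cast card_le_card_sdiff_add_card
  rw [div_lt_iff₀ hn']
  linarith
end

section
/- Assume (aₙ)ₙ≥1 is a sequence of positive real numbers such that the series ∑ aₙ converges, and (bₙ)ₙ≥1 is a nondecreasing sequence of positive real numbers such that ∑_{n=1}^{∞} 1/bₙ = ∞. Then the sequence (aₙ·bₙ)ₙ converges in lower density to 0. -/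
/-!
Let `A = {k | ε ≤ a k * b k}`. On `A` we have `1 / b k ≤ a k / ε`, so `∑_{k ∈ A} 1 / b k < ∞`.
If `A` had lower density `δ > 0`, Abel summation against the nonincreasing sequence `1 / b k`
would give `δ ∑_{k ≤ n} 1 / b k ≤ ∑_{k ≤ n, k ∈ A} 1 / b k + O(1)`, contradicting
`∑ 1 / b k = ∞`.
-/

open Filter Topology Finset

section LowerDensity

variable (p : ℕ → Prop) [DecidablePred p] (c : ℕ → ℝ) (δ : ℝ)

/-- `∑_{k ≤ n, p k} c k - δ ∑_{k ≤ n} c k` minus the boundary term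
`(#{k ≤ n | p k} - δ n) c n` of its Abel summation. -/
noncomputable def abelPotential (n : ℕ) : ℝ :=
  ∑ k ∈ (Icc 1 n).filter p, c k - #((Icc 1 n).filter p) * c n
    - δ * (∑ k ∈ Icc 1 n, c k - n * c n)

lemma abelPotential_succ (n : ℕ) :
    abelPotential p c δ (n + 1) = abelPotential p c δ n
      + (#((Icc 1 n).filter p) - δ * n) * (c n - c (n + 1)) := by
  simp only [abelPotential, sum_filter, card_filter, Nat.cast_sum,
    sum_Icc_succ_top (Nat.le_add_left 1 n)]
  split_ifs <;> push_cast <;> ring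

variable {p c δ}

lemma abelPotential_le_of_le {N n : ℕ} (hc : Antitone c)
    (hdens : ∀ m ≥ N, δ * m ≤ #((Icc 1 m).filter p)) (hNn : N ≤ n) :
    abelPotential p c δ N ≤ abelPotential p c δ n := by
  induction n, hNn using Nat.le_induction with
  | base => rfl
  | succ n hNn ih =>
    rw [abelPotential_succ]
    have : 0 ≤ (#((Icc 1 n).filter p) - δ * n) * (c n - c (n + 1)) :=
      mul_nonneg (sub_nonneg.2 (hdens n hNn)) (sub_nonneg.2 (hc n.le_succ))
    linarith

lemma mul_sum_Icc_le_sum_filter_sub_abelPotential {N n : ℕ} (hc : Antitone c) (hc0 : 0 ≤ c)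
    (hdens : ∀ m ≥ N, δ * m ≤ #((Icc 1 m).filter p)) (hNn : N ≤ n) :
    δ * ∑ k ∈ Icc 1 n, c k ≤ ∑ k ∈ (Icc 1 n).filter p, c k - abelPotential p c δ N := by
  have h := abelPotential_le_of_le hc hdens hNn
  have : 0 ≤ (#((Icc 1 n).filter p) - δ * n) * c n :=
    mul_nonneg (sub_nonneg.2 (hdens n hNn)) (hc0 n)
  simp only [abelPotential] at h ⊢
  linarith

theorem Antitone.summable_of_summable_ite_of_lowerDensity {N : ℕ} (hc : Antitone c)
    (hc0 : 0 ≤ c) (hδ : 0 < δ) (hdens : ∀ m ≥ N, δ * m ≤ #((Icc 1 m).filter p))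
    (hs : Summable fun k => if p k then c k else 0) : Summable c := by
  set B := ((∑' k, if p k then c k else 0) - abelPotential p c δ N) / δ
  refine summable_of_sum_range_le hc0 (c := c 0 + B) fun n => ?_
  have hT : ∑ k ∈ Icc 1 (max n N), c k ≤ B := by
    rw [le_div_iff₀' hδ]
    refine (mul_sum_Icc_le_sum_filter_sub_abelPotential hc hc0 hdens (le_max_right n N)).trans ?_
    rw [sum_filter]
    exact sub_le_sub_right (hs.sum_le_tsum _ fun k _ => ite_nonneg (hc0 k) le_rfl) _
  calc ∑ k ∈ range n, c k ≤ ∑ k ∈ range (max n N + 1), c k :=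
        sum_le_sum_of_subset_of_nonneg (range_subset_range.2 (by omega)) fun k _ _ => hc0 k
    _ = c 0 + ∑ k ∈ Icc 1 (max n N), c k := by
        rw [Nat.range_succ_eq_Icc_zero, ← add_sum_Ioc_eq_sum_Icc (Nat.zero_le _)]
        rfl
    _ ≤ c 0 + B := by linarith

end LowerDensity

lemma liminf_eq_zero_of_frequently_lt {ι : Type*} {l : Filter ι} {f : ι → ℝ} (hf0 : 0 ≤ f)
    (hf : ∀ δ > 0, ∃ᶠ i in l, f i < δ) : liminf f l = 0 := by
  have hbdd : IsBoundedUnder (· ≥ ·) l f := isBoundedUnder_of ⟨0, hf0⟩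
  have hcobdd : IsCoboundedUnder (· ≥ ·) l f := ⟨0, fun δ hδ => not_lt.1 fun hδ0 => by
    obtain ⟨i, hi, hδi⟩ := ((hf δ hδ0).and_eventually hδ).exists
    exact hi.not_ge hδi⟩
  refine le_antisymm (le_of_forall_pos_le_add fun δ hδ => ?_)
    (le_liminf_of_le hcobdd (Eventually.of_forall hf0))
  simpa using liminf_le_of_frequently_le ((hf δ hδ).mono fun i hi => hi.le) hbdd

theorem salat_toma_gen_lower_general (a b : ℕ → ℝ)
    (hsum : Summable a) (hb : ∀ n, 0 < b n) (hmono : Monotone b)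
    (hdiv : ¬ Summable (fun n => 1 / b n)) :
    ∀ ε > (0 : ℝ),
      liminf
        (fun n : ℕ =>
          (((Finset.Icc 1 n).filter (fun k : ℕ => ε ≤ a k * b k)).card : ℝ) / n)
        atTop = 0 := by
  intro ε hε
  refine liminf_eq_zero_of_frequently_lt (fun n => by positivity) fun δ hδ => ?_
  by_contra hdense
  obtain ⟨N, hN⟩ := eventually_atTop.1 (not_frequently.1 hdense)
  have hcount : ∀ m ≥ N, δ * m ≤ #((Icc 1 m).filter fun k => ε ≤ a k * b k) := by
    intro m hm
    rcases m.eq_zero_or_pos with rfl | hm0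
    · simp
    · exact (le_div_iff₀ (by exact_mod_cast hm0)).1 (not_lt.1 (hN m hm))
  have hsummable_on : Summable fun k => if ε ≤ a k * b k then 1 / b k else 0 := by
    refine (hsum.abs.div_const ε).of_nonneg_of_le (fun k => ?_) fun k => ?_
    · split_ifs <;> simp [(hb k).le]
    · split_ifs with hk
      · rw [div_le_div_iff₀ (hb k) hε]
        nlinarith [le_abs_self (a k), hb k]
      · positivity
  have hanti : Antitone fun n => 1 / b n := fun m n hmn =>
    one_div_le_one_div_of_le (hb m) (hmono hmn)
  exact hdiv <| hanti.summable_of_summable_ite_of_lowerDensity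
    (fun n => (one_div_pos.2 (hb n)).le) hδ hcount hsummable_on

/-- Generalized Šalát–Toma theorem, first part: if `∑ a n` is a convergent
positive series and `(b n)` is a nondecreasing sequence of positive reals with
`∑ 1 / b n = ∞`, then `(a n * b n)` converges in lower density to `0`. -/
theorem salat_toma_gen_lower (a b : ℕ → ℝ) (ha : ∀ n, 0 < a n)
    (hsum : Summable a) (hb : ∀ n, 0 < b n) (hmono : Monotone b)
    (hdiv : ¬ Summable (fun n => 1 / b n)) :
    ∀ ε > (0 : ℝ),
      liminf
        (fun n : ℕ =>
          (((Finset.Icc 1 n).filter (fun k : ℕ => ε ≤ a k * b k)).card : ℝ) / n)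
        atTop = 0 :=
  salat_toma_gen_lower_general a b hsum hb hmono hdiv
end

section
/- Assume (aₙ)ₙ≥1 is a sequence of positive real numbers such that the series ∑ aₙ converges, and (bₙ)ₙ≥1 is a nondecreasing sequence of positive real numbers such that ∑_{n=1}^{∞} 1/bₙ = ∞ and inf_{n≥1} n/bₙ > 0. Then the sequence (aₙ·bₙ)ₙ converges in density to 0. -/
/-!
On `S = {k | ε ≤ a k * b k}` we have `1 / b k ≤ |a k| / ε`, so `∑_{k ∈ S} 1 / b k < ∞`. Choose a
finite `s` such that `∑_{k ∈ S \ s} 1 / b k` stays below `δ`. As `b` is nondecreasing, each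
`k ∈ S ∩ [1, n]` outside `s` contributes at least `1 / b n`, so there are at most
`b n * δ ≤ n * δ / c` of them, and `|S ∩ [1, n]| ≤ |s| + n * δ / c`.
-/

open Filter Topology Finset

lemma card_le_mul_sum_inv {b : ℕ → ℝ} (hb : ∀ n, 0 < b n) (hmono : Monotone b)
    {t : Finset ℕ} {n : ℕ} (ht : ∀ k ∈ t, k ≤ n) :
    (#t : ℝ) ≤ b n * ∑ k ∈ t, 1 / b k := by
  rw [card_eq_sum_ones, Nat.cast_sum, mul_sum]
  refine sum_le_sum fun k hk => ?_
  rw [mul_one_div, Nat.cast_one, one_le_div (hb k)]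
  exact hmono (ht k hk)

theorem tendsto_card_filter_Icc_div_atTop_zero {p : ℕ → Prop} [DecidablePred p] {b : ℕ → ℝ}
    {C : ℝ} (hb : ∀ n, 0 < b n) (hmono : Monotone b) (hC : ∀ n, 1 ≤ n → b n ≤ C * n)
    (hsum : Summable fun k => if p k then 1 / b k else 0) :
    Tendsto (fun n : ℕ => (#{k ∈ Icc 1 n | p k} : ℝ) / n) atTop (𝓝 0) := by
  have hC0 : 0 < C := by simpa using (hb 1).trans_le (hC 1 le_rfl)
  refine tendsto_order.2 ⟨fun δ hδ => Eventually.of_forall fun n => hδ.trans_le (by positivity),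
    fun δ hδ => ?_⟩
  obtain ⟨s, hs⟩ := hsum.vanishing (Iio_mem_nhds (show 0 < δ / (2 * C) by positivity))
  have hcount : ∀ n, 1 ≤ n → (#{k ∈ Icc 1 n | p k} : ℝ) ≤ #s + δ / 2 * n := by
    intro n hn
    set t := {k ∈ Icc 1 n | p k} \ s
    have hmem : ∀ k ∈ t, k ≤ n ∧ p k := fun k hk => by
      simp only [t, Finset.mem_sdiff, mem_filter, mem_Icc] at hk
      exact ⟨hk.1.1.2, hk.1.2⟩
    have ht_sum : ∑ k ∈ t, 1 / b k < δ / (2 * C) :=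
      (sum_congr rfl fun k hk => (if_pos (hmem k hk).2).symm).trans_lt (hs t sdiff_disjoint)
    have ht : (#t : ℝ) ≤ δ / 2 * n := calc
      (#t : ℝ) ≤ b n * ∑ k ∈ t, 1 / b k :=
        card_le_mul_sum_inv hb hmono fun k hk => (hmem k hk).1
      _ ≤ C * n * (δ / (2 * C)) := by
        gcongr
        · exact sum_nonneg fun k _ => (one_div_pos.2 (hb k)).le
        · exact hC n hn
      _ = δ / 2 * n := by field_simp
    calc (#{k ∈ Icc 1 n | p k} : ℝ) ≤ #t + #s := by exact_mod_cast card_le_card_sdiff_add_card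
      _ ≤ #s + δ / 2 * n := by linarith
  filter_upwards [(tendsto_const_div_atTop_nhds_zero_nat (#s : ℝ)).eventually
    (gt_mem_nhds (half_pos hδ)), eventually_ge_atTop 1] with n hsn hn
  have hn0 : (0 : ℝ) < n := by exact_mod_cast hn
  rw [div_lt_iff₀ hn0]
  rw [div_lt_iff₀ hn0] at hsn
  linarith [hcount n hn]

lemma summable_ite_one_div_of_summable {a b : ℕ → ℝ} (hb : ∀ n, 0 < b n) (ha : Summable a)
    {ε : ℝ} (hε : 0 < ε) : Summable fun k => if ε ≤ a k * b k then 1 / b k else 0 := by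
  refine Summable.of_nonneg_of_le (fun k => ?_) (fun k => ?_) (ha.abs.div_const ε)
  · split_ifs
    · exact (one_div_pos.2 (hb k)).le
    · exact le_rfl
  · split_ifs with h
    · rw [div_le_div_iff₀ (hb k) hε, one_mul]
      exact h.trans (mul_le_mul_of_nonneg_right (le_abs_self _) (hb k).le)
    · positivity

theorem salat_toma_gen_general (a b : ℕ → ℝ)
    (hsum : Summable a) (hb : ∀ n, 0 < b n) (hmono : Monotone b)
    (hinf : ∃ c > (0 : ℝ), ∀ n : ℕ, 1 ≤ n → c ≤ (n : ℝ) / b n) :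
    ∀ ε > (0 : ℝ),
      Tendsto
        (fun n : ℕ =>
          (((Finset.Icc 1 n).filter (fun k : ℕ => ε ≤ a k * b k)).card : ℝ) / n)
        atTop (𝓝 0) := by
  obtain ⟨c, hc, hcb⟩ := hinf
  intro ε hε
  refine tendsto_card_filter_Icc_div_atTop_zero hb hmono (C := c⁻¹) (fun n hn => ?_)
    (summable_ite_one_div_of_summable hb hsum hε)
  rw [← div_eq_inv_mul, le_div_iff₀ hc, mul_comm, ← le_div_iff₀ (hb n)]
  exact hcb n hn

/-- Generalized Šalát–Toma theorem, second part: if moreover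
`inf_{n ≥ 1} n / b n > 0`, then `(a n * b n)` converges in density to `0`. -/
theorem salat_toma_gen (a b : ℕ → ℝ) (ha : ∀ n, 0 < a n)
    (hsum : Summable a) (hb : ∀ n, 0 < b n) (hmono : Monotone b)
    (hdiv : ¬ Summable (fun n => 1 / b n))
    (hinf : ∃ c > (0 : ℝ), ∀ n : ℕ, 1 ≤ n → c ≤ (n : ℝ) / b n) :
    ∀ ε > (0 : ℝ),
      Tendsto
        (fun n : ℕ =>
          (((Finset.Icc 1 n).filter (fun k : ℕ => ε ≤ a k * b k)).card : ℝ) / n)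
        atTop (𝓝 0) :=
  salat_toma_gen_general a b hsum hb hmono hinf
end

section
/- If (aₙ)ₙ≥1 is a sequence of positive real numbers such that the series ∑ aₙ converges, then for each natural number k ≥ 1, the sequence whose n-th term is n·(ln n)·(ln ln n)⋯(ln^{[k]} n)·aₙ (the product of n, the first k iterated natural logarithms of n, and aₙ) converges in lower density to 0. -/
/-!
Let `w n = 1 / (n · log n ⋯ log^[k] n)`. Where the sequence is at least `ε` we have
`w n ≤ a n / ε`, so `w` is summable over that set. On the other hand `w n` dominates the
increment of `log^[k+1]` between `n` and `n + 1`, so `∑ w n = ∞`. For a nonincreasing weight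
with divergent sum, Abel summation shows that every set of positive lower density carries a
divergent part of the sum; hence the set has lower density zero.
-/

open Filter Topology Finset Real

section Density

variable {P : ℕ → Prop} [DecidablePred P] {w : ℕ → ℝ}

/-- Abel summation of `w` against the counting function of `P`. -/
lemma mul_le_sum_filter_sub_of_le_card (hw : Antitone w) {δ : ℝ} {N : ℕ}
    (hC : ∀ n ≥ N, δ * n ≤ #{m ∈ Icc 1 n | P m}) {M : ℕ} (hM : N ≤ M) :
    δ * (N * w N - M * w M + (∑ m ∈ range (M + 1), w m - ∑ m ∈ range (N + 1), w m)) ≤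
      ∑ m ∈ Icc 1 M with P m, (w m - w M) := by
  induction M, hM using Nat.le_induction with
  | base =>
    simp only [sub_self, add_zero, mul_zero]
    exact sum_nonneg fun m hm => sub_nonneg.2 <| hw (mem_Icc.1 (mem_filter.1 hm).1).2
  | succ M hNM ih =>
    have hsplit : ∑ m ∈ Icc 1 (M + 1) with P m, (w m - w (M + 1)) =
        ∑ m ∈ Icc 1 M with P m, (w m - w M) + #{m ∈ Icc 1 M | P m} * (w M - w (M + 1)) := by
      rw [← sum_subset (filter_subset_filter _ (Icc_subset_Icc_right M.le_succ))]
      · simp only [sum_sub_distrib, sum_const, nsmul_eq_mul]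
        ring
      · intro m hm hm'
        obtain ⟨hmIcc, hPm⟩ := mem_filter.1 hm
        obtain ⟨h1m, hmM⟩ := mem_Icc.1 hmIcc
        have hmM' : ¬m ≤ M := fun h => hm' (mem_filter.2 ⟨mem_Icc.2 ⟨h1m, h⟩, hPm⟩)
        obtain rfl : m = M + 1 := by omega
        simp
    have hstep := mul_le_mul_of_nonneg_right (hC M hNM) (sub_nonneg.2 (hw M.le_succ))
    rw [hsplit, sum_range_succ]
    push_cast
    nlinarith

theorem liminf_card_filter_div_eq_zero (hw0 : ∀ n, 0 ≤ w n) (hw : Antitone w)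
    (hdiv : ¬Summable w) (hP : Summable fun n => if P n then w n else 0) :
    liminf (fun n : ℕ => (#{m ∈ Icc 1 n | P m} : ℝ) / n) atTop = 0 := by
  set u := fun n : ℕ => (#{m ∈ Icc 1 n | P m} : ℝ) / n
  have hu0 (n : ℕ) : 0 ≤ u n := by positivity
  have hu1 (n : ℕ) : u n ≤ 1 :=
    div_le_one_of_le₀ (by exact_mod_cast (card_filter_le _ _).trans_eq (Nat.card_Icc 1 n))
      n.cast_nonneg
  refine le_antisymm ?_ <|
    le_liminf_of_le (isBoundedUnder_of ⟨1, hu1⟩).isCoboundedUnder_ge (.of_forall hu0)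
  by_contra! hpos
  obtain ⟨δ, hδ, hδu⟩ := exists_between hpos
  obtain ⟨N, hN⟩ := eventually_atTop.1 <|
    (eventually_lt_of_lt_liminf hδu (isBoundedUnder_of ⟨0, hu0⟩)).and (eventually_gt_atTop 0)
  have hC : ∀ n ≥ N, δ * n ≤ #{m ∈ Icc 1 n | P m} := fun n hn =>
    ((lt_div_iff₀ (Nat.cast_pos.2 (hN n hn).2)).1 (hN n hn).1).le
  have hbound (M : ℕ) : ∑ m ∈ Icc 1 M with P m, w m ≤ ∑' n, if P n then w n else 0 := by
    rw [sum_filter]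
    exact hP.sum_le_tsum _ fun n _ => by split_ifs <;> simp [hw0]
  have hgrow : Tendsto (fun M => δ * (∑ m ∈ range (M + 1), w m - ∑ m ∈ range (N + 1), w m))
      atTop atTop :=
    (tendsto_atTop_add_const_right _ _ <| ((not_summable_iff_tendsto_nat_atTop_of_nonneg hw0).1
      hdiv).comp (tendsto_add_atTop_nat 1)).const_mul_atTop hδ
  obtain ⟨M, hNM, hM⟩ := ((eventually_ge_atTop N).and
    (hgrow.eventually_gt_atTop (∑' n, if P n then w n else 0))).exists
  have habel := mul_le_sum_filter_sub_of_le_card hw hC hNM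
  rw [sum_sub_distrib, sum_const, nsmul_eq_mul] at habel
  have hcard := mul_le_mul_of_nonneg_right (hC M hNM) (hw0 M)
  have hNw := mul_nonneg (mul_nonneg hδ.le N.cast_nonneg) (hw0 N)
  linarith [hbound M]

end Density

lemma log_sub_log_le_div {x y : ℝ} (hx : 0 < x) (hy : 0 < y) : log y - log x ≤ (y - x) / x := by
  rw [← log_div hy.ne' hx.ne', sub_div, div_self hx.ne']
  exact log_le_sub_one_of_pos (div_pos hy hx)

lemma not_summable_of_tendsto_of_sub_le {g w : ℕ → ℝ} (hg : Tendsto g atTop atTop)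
    (hgw : ∀ n, g (n + 1) - g n ≤ w n) : ¬Summable w := fun hw =>
  not_tendsto_atTop_of_tendsto_nhds hw.hasSum.tendsto_sum_nat <|
    tendsto_atTop_mono (fun n => (sum_range_sub g n).symm.trans_le (sum_le_sum fun i _ => hgw i))
      (tendsto_atTop_add_const_right _ (-g 0) hg)

lemma tendsto_iterate_log (k : ℕ) : Tendsto log^[k] atTop atTop := by
  induction k with
  | zero => exact tendsto_id
  | succ k ih => exact ih.comp tendsto_log_atTop

section IteratedLog

variable {k : ℕ} {x y : ℝ}

lemma monotone_iterate_exp_one : Monotone fun k => exp^[k] (1 : ℝ) :=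
  exp_monotone.monotone_iterate_of_le_map (one_le_exp zero_le_one)

lemma one_le_iterate_log (hx : exp^[k] 1 ≤ x) : 1 ≤ log^[k] x := by
  induction k generalizing x with
  | zero => simpa using hx
  | succ k ih =>
    rw [Function.iterate_succ_apply]
    rw [Function.iterate_succ_apply'] at hx
    exact ih ((le_log_iff_exp_le ((exp_pos _).trans_le hx)).2 hx)

lemma one_le_iterate_log_of_le {j : ℕ} (hjk : j ≤ k) (hx : exp^[k] 1 ≤ x) : 1 ≤ log^[j] x :=
  one_le_iterate_log ((monotone_iterate_exp_one hjk).trans hx)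

lemma iterate_log_le_iterate_log (hx : exp^[k] 1 ≤ x) (hxy : x ≤ y) :
    log^[k] x ≤ log^[k] y := by
  induction k generalizing x y with
  | zero => simpa using hxy
  | succ k ih =>
    rw [Function.iterate_succ_apply'] at hx
    have hx0 : 0 < x := (exp_pos _).trans_le hx
    simp only [Function.iterate_succ_apply]
    exact ih ((le_log_iff_exp_le hx0).2 hx) (log_le_log hx0 hxy)

noncomputable def iterLogProd (k : ℕ) (x : ℝ) : ℝ := x * ∏ j ∈ Icc 1 k, log^[j] x

lemma iterLogProd_succ : iterLogProd (k + 1) x = iterLogProd k x * log^[k + 1] x := by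
  rw [iterLogProd, iterLogProd, prod_Icc_succ_top (by omega), mul_assoc]

lemma iterLogProd_pos (hx : exp^[k] 1 ≤ x) : 0 < iterLogProd k x :=
  mul_pos (one_pos.trans_le (one_le_iterate_log_of_le k.zero_le hx)) <|
    prod_pos fun _ hj => one_pos.trans_le (one_le_iterate_log_of_le (mem_Icc.1 hj).2 hx)

lemma iterLogProd_le_iterLogProd (hx : exp^[k] 1 ≤ x) (hxy : x ≤ y) :
    iterLogProd k x ≤ iterLogProd k y := by
  induction k with
  | zero => simpa [iterLogProd] using hxy
  | succ k ih =>
    have hx' := (monotone_iterate_exp_one k.le_succ).trans hx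
    rw [iterLogProd_succ, iterLogProd_succ]
    exact mul_le_mul (ih hx') (iterate_log_le_iterate_log hx hxy)
      (zero_le_one.trans (one_le_iterate_log hx)) (iterLogProd_pos (hx'.trans hxy)).le

/-- `1 / iterLogProd k` is the derivative of `log^[k + 1]`. -/
lemma iterate_log_succ_sub_le (hx : exp^[k] 1 ≤ x) (hxy : x ≤ y) :
    log^[k + 1] y - log^[k + 1] x ≤ (y - x) / iterLogProd k x := by
  induction k with
  | zero =>
    rw [Function.iterate_zero_apply] at hx
    simpa [iterLogProd] using log_sub_log_le_div (by linarith) (by linarith)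
  | succ k ih =>
    have hx' := (monotone_iterate_exp_one k.le_succ).trans hx
    have hlx := one_le_iterate_log hx
    have hly := one_le_iterate_log (hx.trans hxy)
    rw [Function.iterate_succ_apply' _ (k + 1), Function.iterate_succ_apply' _ (k + 1),
      iterLogProd_succ, ← div_div]
    exact (log_sub_log_le_div (by linarith) (by linarith)).trans <|
      div_le_div_of_nonneg_right (ih hx') (by linarith)

end IteratedLog

/-- `1 / iterLogProd k n`, with `n` raised to `exp^[k] 1`: below that point `iterLogProd k` need
not be positive or monotone. -/
noncomputable def iterLogWeight (k n : ℕ) : ℝ := (iterLogProd k (max n (exp^[k] 1)))⁻¹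

lemma iterLogWeight_pos (k n : ℕ) : 0 < iterLogWeight k n :=
  inv_pos.2 (iterLogProd_pos (le_max_right _ _))

lemma antitone_iterLogWeight (k : ℕ) : Antitone (iterLogWeight k) := fun _ _ hmn =>
  inv_anti₀ (iterLogProd_pos (le_max_right _ _)) <|
    iterLogProd_le_iterLogProd (le_max_right _ _) (max_le_max_right _ (by exact_mod_cast hmn))

lemma not_summable_iterLogWeight (k : ℕ) : ¬Summable (iterLogWeight k) := by
  refine not_summable_of_tendsto_of_sub_le (g := fun n : ℕ => log^[k + 1] (max n (exp^[k] 1)))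
    ((tendsto_iterate_log (k + 1)).comp <| tendsto_atTop_mono (fun n => le_max_left _ _)
      tendsto_natCast_atTop_atTop) fun n => ?_
  have hstep : max ((n + 1 : ℕ) : ℝ) (exp^[k] 1) - max (n : ℝ) (exp^[k] 1) ≤ 1 :=
    (max_sub_max_le_max _ _ _ _).trans (max_le (by push_cast; linarith) (by simp))
  refine (iterate_log_succ_sub_le (le_max_right _ _) (max_le_max_right _ (by simp))).trans ?_
  rw [div_eq_mul_inv]
  exact mul_le_of_le_one_left (iterLogWeight_pos k n).le hstep

lemma summable_ite_iterLogWeight {k : ℕ} {a : ℕ → ℝ} (ha : Summable a) {ε : ℝ} (hε : 0 < ε) :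
    Summable fun n : ℕ => if ε ≤ iterLogProd k n * a n then iterLogWeight k n else 0 := by
  refine Summable.of_norm_bounded_eventually_nat (ha.norm.div_const ε) ?_
  filter_upwards [tendsto_natCast_atTop_atTop.eventually_ge_atTop (exp^[k] 1)] with n hn
  split_ifs with hPn
  · have hF := iterLogProd_pos hn
    rw [iterLogWeight, max_eq_left hn, norm_inv, Real.norm_of_nonneg hF.le]
    rw [le_div_iff₀ hε, inv_mul_le_iff₀ hF]
    exact hPn.trans (mul_le_mul_of_nonneg_left (le_norm_self _) hF.le)
  · simpa using div_nonneg (norm_nonneg (a n)) hε.le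

theorem salat_toma_iterated_log_general (a : ℕ → ℝ)
    (hsum : Summable a) :
    ∀ k : ℕ, 1 ≤ k → ∀ ε > (0 : ℝ),
      liminf
        (fun n : ℕ =>
          (((Finset.Icc 1 n).filter
            (fun m : ℕ =>
              ε ≤ (m : ℝ) * (∏ j ∈ Finset.Icc 1 k, Real.log^[j] (m : ℝ)) * a m)).card : ℝ) / n)
        atTop = 0 := by
  intro k _ ε hε
  exact liminf_card_filter_div_eq_zero (fun n => (iterLogWeight_pos k n).le)
    (antitone_iterLogWeight k) (not_summable_iterLogWeight k) (summable_ite_iterLogWeight hsum hε)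

/-- If `∑ a n` is a convergent positive series, then for each `k ≥ 1` the
sequence `n * (log n) * (log log n) * ⋯ * (log^[k] n) * a n` converges in lower
density to `0`. -/
theorem salat_toma_iterated_log (a : ℕ → ℝ) (ha : ∀ n, 0 < a n)
    (hsum : Summable a) :
    ∀ k : ℕ, 1 ≤ k → ∀ ε > (0 : ℝ),
      liminf
        (fun n : ℕ =>
          (((Finset.Icc 1 n).filter
            (fun m : ℕ =>
              ε ≤ (m : ℝ) * (∏ j ∈ Finset.Icc 1 k, Real.log^[j] (m : ℝ)) * a m)).card : ℝ) / n)
        atTop = 0 :=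
  salat_toma_iterated_log_general a hsum
end

section
/- Let S be an infinite set of positive integers and let (aₙ)ₙ≥1 be a sequence of positive real numbers whose restriction to S is nonincreasing (i.e., aₘ ≥ aₙ whenever m, n ∈ S and m ≤ n). If ∑_{n∈S} aₙ < ∞ and inf{ n·aₙ : n ∈ S } > 0, then S has zero density. -/
/-!
Write `N(n)` for the number of elements of `S` in `[1, n]`. Every `k ∈ S` with `m ≤ k ≤ n`
satisfies `c / n ≤ c / k ≤ a k`, so the elements of `S` in `[m, n]` number at most
`(n / c) ∑_{k ∈ S, k ≥ m} a k`. Hence `N(n) / n ≤ m / n + (1 / c) ∑_{k ∈ S, k ≥ m} a k`, and the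
tail of the convergent series can be made small by the choice of `m` before letting `n → ∞`.
-/

open Filter Topology

open scoped Classical

open Finset

theorem card_filter_Icc_le_add_card_filter_Ico (S : Set ℕ) (m n : ℕ) :
    #{k ∈ Icc 1 n | k ∈ S} ≤ m + #{k ∈ Ico m (n + 1) | k ∈ S} := by
  have hsub : Icc 1 n ⊆ Icc 1 m ∪ Ico m (n + 1) := by
    intro k hk
    simp only [mem_union, mem_Icc, mem_Ico] at hk ⊢
    omega
  calc #{k ∈ Icc 1 n | k ∈ S}
      ≤ #{k ∈ Icc 1 m ∪ Ico m (n + 1) | k ∈ S} := card_le_card (filter_subset_filter _ hsub)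
    _ ≤ #{k ∈ Icc 1 m | k ∈ S} + #{k ∈ Ico m (n + 1) | k ∈ S} := by
        rw [filter_union]; exact card_union_le _ _
    _ ≤ m + #{k ∈ Ico m (n + 1) | k ∈ S} := by
        gcongr
        exact (card_filter_le _ _).trans (by simp)

theorem mul_card_filter_le_mul_sum_indicator {S : Set ℕ} {a : ℕ → ℝ} {c : ℝ}
    (ha : ∀ k ∈ S, 0 ≤ a k) (hca : ∀ k ∈ S, c ≤ k * a k) {s : Finset ℕ} {n : ℕ}
    (hsn : ∀ k ∈ s, k ≤ n) :
    c * #{k ∈ s | k ∈ S} ≤ n * ∑ k ∈ s, S.indicator a k := by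
  rw [sum_indicator_eq_sum_filter, mul_sum, mul_comm, ← nsmul_eq_mul]
  refine card_nsmul_le_sum _ _ _ fun k hk => ?_
  obtain ⟨hks, hkS⟩ := mem_filter.mp hk
  calc c ≤ k * a k := hca k hkS
    _ ≤ n * a k := mul_le_mul_of_nonneg_right (by exact_mod_cast hsn k hks) (ha k hkS)

theorem sum_Ico_le_tsum_nat_add {f : ℕ → ℝ} (hf : Summable f) (hf0 : ∀ k, 0 ≤ f k) (m N : ℕ) :
    ∑ k ∈ Ico m N, f k ≤ ∑' k, f (k + m) := by
  rw [sum_Ico_eq_sum_range]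
  simp only [add_comm m]
  exact ((summable_nat_add_iff m).mpr hf).sum_le_tsum _ fun k _ => hf0 _

theorem card_filter_Icc_div_le {S : Set ℕ} {a : ℕ → ℝ} {c : ℝ} (hc : 0 < c)
    (hca : ∀ k ∈ S, c ≤ k * a k) (hsum : Summable (S.indicator a)) (m : ℕ) {n : ℕ} (hn : 0 < n) :
    (#{k ∈ Icc 1 n | k ∈ S} : ℝ) / n ≤ m / n + (∑' k, S.indicator a (k + m)) / c := by
  have ha : ∀ k ∈ S, 0 ≤ a k := fun k hk =>
    (pos_of_mul_pos_right (hc.trans_le (hca k hk)) k.cast_nonneg).le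
  set T := #{k ∈ Ico m (n + 1) | k ∈ S}
  have hcount : (#{k ∈ Icc 1 n | k ∈ S} : ℝ) ≤ m + T := by
    exact_mod_cast card_filter_Icc_le_add_card_filter_Ico S m n
  have hT : c * T ≤ n * ∑' k, S.indicator a (k + m) := by
    refine (mul_card_filter_le_mul_sum_indicator (n := n) ha hca fun k hk => ?_).trans ?_
    · simp only [mem_Ico] at hk; omega
    · exact mul_le_mul_of_nonneg_left
        (sum_Ico_le_tsum_nat_add hsum (Set.indicator_nonneg ha) m (n + 1)) n.cast_nonneg
  have hnR : (0 : ℝ) < n := by exact_mod_cast hn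
  calc (#{k ∈ Icc 1 n | k ∈ S} : ℝ) / n ≤ (m + T) / n := by gcongr
    _ = m / n + T / n := add_div _ _ _
    _ ≤ m / n + (∑' k, S.indicator a (k + m)) / c := by
        rw [add_le_add_iff_left, div_le_div_iff₀ hnR hc]
        linarith

theorem tendsto_zero_of_eventually_le_div_add {u τ : ℕ → ℝ} (hu : ∀ n, 0 ≤ u n)
    (hτ : Tendsto τ atTop (𝓝 0)) (h : ∀ m, ∀ᶠ n in atTop, u n ≤ m / n + τ m) :
    Tendsto u atTop (𝓝 0) := by
  refine tendsto_order.2 ⟨fun b hb => Eventually.of_forall fun n => hb.trans_le (hu n),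
    fun ε hε => ?_⟩
  obtain ⟨m, hm⟩ := (hτ.eventually (gt_mem_nhds hε)).exists
  have hlim : Tendsto (fun n : ℕ => (m : ℝ) / n + τ m) atTop (𝓝 (τ m)) := by
    simpa using (tendsto_const_div_atTop_nhds_zero_nat (m : ℝ)).add_const (τ m)
  filter_upwards [h m, hlim.eventually (gt_mem_nhds hm)] with n hn hlt
  exact hn.trans_lt hlt

theorem zero_density_of_summable_subseries_general (a : ℕ → ℝ) (S : Set ℕ)
    (hsum : Summable (fun n : S => a n))
    (hinf : ∃ c > (0 : ℝ), ∀ n ∈ S, c ≤ (n : ℝ) * a n) :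
    Tendsto
      (fun n : ℕ => (((Finset.Icc 1 n).filter (fun k : ℕ => k ∈ S)).card : ℝ) / n)
      atTop (𝓝 0) := by
  obtain ⟨c, hc, hca⟩ := hinf
  have hind : Summable (S.indicator a) := summable_subtype_iff_indicator.mp hsum
  have htail : Tendsto (fun m => (∑' k, S.indicator a (k + m)) / c) atTop (𝓝 0) := by
    simpa using (tendsto_sum_nat_add (S.indicator a)).div_const c
  refine tendsto_zero_of_eventually_le_div_add (fun n => by positivity) htail fun m => ?_
  filter_upwards [eventually_gt_atTop 0] with n hn
  exact card_filter_Icc_div_le hc hca hind m hn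

/-- If `S` is an infinite set of positive integers, `(a n)` is a sequence of
positive reals whose restriction to `S` is nonincreasing, `∑_{n ∈ S} a n < ∞`
and `inf { n * a n : n ∈ S } > 0`, then `S` has zero density. -/
theorem zero_density_of_summable_subseries (a : ℕ → ℝ) (S : Set ℕ)
    (hSinf : S.Infinite) (hS : ∀ n ∈ S, 1 ≤ n) (ha : ∀ n, 0 < a n)
    (hanti : ∀ m ∈ S, ∀ n ∈ S, m ≤ n → a n ≤ a m)
    (hsum : Summable (fun n : S => a n))
    (hinf : ∃ c > (0 : ℝ), ∀ n ∈ S, c ≤ (n : ℝ) * a n) :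
    Tendsto
      (fun n : ℕ => (((Finset.Icc 1 n).filter (fun k : ℕ => k ∈ S)).card : ℝ) / n)
      atTop (𝓝 0) :=
  zero_density_of_summable_subseries_general a S hsum hinf
end

section
/- Let (bₙ)ₙ≥1 be a sequence of positive real numbers such that (n·bₙ)ₙ is nonincreasing and inf_{n} (n·ln n)·bₙ > 0. Then every set S of positive integers for which ∑_{n∈S} bₙ < ∞ has zero harmonic density. -/
open Filter Topology

open scoped Classical

/-!
For `m < k ≤ n` the hypotheses give `c ≤ log n · n b_n ≤ log n · k b_k`, so `1/k ≤ (log n / c) b_k`.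
Splitting the harmonic sum of `S` up to `n` at a fixed `m` therefore bounds it by its value at `m`
plus `log n / c` times a tail of the convergent series `∑_{k ∈ S} b_k`; choosing `m` with a small
tail shows that the sum is `o(log n)`.
-/

lemma Summable.exists_forall_norm_sum_Ioc_lt {E : Type*} [SeminormedAddCommGroup E]
    {f : ℕ → E} (hf : Summable f) {ε : ℝ} (hε : 0 < ε) :
    ∃ m, ∀ n, ‖∑ k ∈ Finset.Ioc m n, f k‖ < ε := by
  obtain ⟨m, hm⟩ := hf.nat_tsum_vanishing (Metric.ball_mem_nhds 0 hε)
  refine ⟨m, fun n => ?_⟩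
  have hsmall := hm (Finset.Ioc m n) fun k hk => (Finset.mem_Ioc.1 hk).1.le
  rwa [Finset.tsum_subtype', mem_ball_zero_iff] at hsmall

lemma tendsto_one_div_log_mul_nhds_zero {u : ℕ → ℝ} (hu : ∀ n, 0 ≤ u n)
    (h : ∀ ε > 0, ∃ A, ∀ᶠ n in atTop, u n ≤ A + ε * Real.log n) :
    Tendsto (fun n : ℕ => 1 / Real.log n * u n) atTop (𝓝 0) := by
  have hlittle : u =o[atTop] fun n : ℕ => Real.log n := by
    refine Asymptotics.isLittleO_iff.2 fun ε hε => ?_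
    obtain ⟨A, hA⟩ := h (ε / 2) (half_pos hε)
    have hlog : Tendsto (fun n : ℕ => Real.log n) atTop atTop :=
      Real.tendsto_log_atTop.comp tendsto_natCast_atTop_atTop
    filter_upwards [hA, hlog.eventually_ge_atTop (max 0 (2 * A / ε))] with n hun hlogn
    have hA_le : 2 * A / ε ≤ Real.log n := le_of_max_le_right hlogn
    rw [div_le_iff₀ hε] at hA_le
    rw [Real.norm_of_nonneg (hu n), Real.norm_of_nonneg (le_of_max_le_left hlogn)]
    linarith
  simpa only [one_div_mul_eq_div] using hlittle.tendsto_div_nhds_zero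

section HarmonicSum

variable {b : ℕ → ℝ} {c : ℝ}

lemma inv_le_log_div_mul (hanti : ∀ m n : ℕ, 1 ≤ m → m ≤ n → (n : ℝ) * b n ≤ (m : ℝ) * b m)
    (hc : 0 < c) (hcb : ∀ n : ℕ, 2 ≤ n → c ≤ ((n : ℝ) * Real.log n) * b n)
    {k n : ℕ} (hk : 1 ≤ k) (hkn : k ≤ n) (hn : 2 ≤ n) :
    (k : ℝ)⁻¹ ≤ Real.log n / c * b k := by
  have hk0 : (0 : ℝ) < k := by exact_mod_cast hk
  have hlog : 0 ≤ Real.log n := Real.log_natCast_nonneg n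
  have key : c ≤ k * (Real.log n * b k) :=
    calc c ≤ Real.log n * (n * b n) := by linarith [hcb n hn]
      _ ≤ Real.log n * (k * b k) := mul_le_mul_of_nonneg_left (hanti k n hk hkn) hlog
      _ = k * (Real.log n * b k) := by ring
  rw [div_mul_eq_mul_div, le_div_iff₀ hc, inv_mul_le_iff₀ hk0]
  exact key

lemma sum_Ioc_ite_inv_le (hanti : ∀ m n : ℕ, 1 ≤ m → m ≤ n → (n : ℝ) * b n ≤ (m : ℝ) * b m)
    (hc : 0 < c) (hcb : ∀ n : ℕ, 2 ≤ n → c ≤ ((n : ℝ) * Real.log n) * b n)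
    (S : Set ℕ) (m : ℕ) {n : ℕ} (hn : 2 ≤ n) :
    ∑ k ∈ Finset.Ioc m n, (if k ∈ S then (k : ℝ)⁻¹ else 0)
      ≤ Real.log n / c * ∑ k ∈ Finset.Ioc m n, S.indicator b k := by
  rw [Finset.mul_sum]
  refine Finset.sum_le_sum fun k hk => ?_
  obtain ⟨hmk, hkn⟩ := Finset.mem_Ioc.1 hk
  by_cases hkS : k ∈ S
  · rw [if_pos hkS, Set.indicator_of_mem hkS]
    exact inv_le_log_div_mul hanti hc hcb (by omega) hkn hn
  · rw [if_neg hkS, Set.indicator_of_notMem hkS, mul_zero]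

end HarmonicSum

theorem zero_harmonic_density_of_summable_subseries_general (b : ℕ → ℝ)
    (hanti : ∀ m n : ℕ, 1 ≤ m → m ≤ n → (n : ℝ) * b n ≤ (m : ℝ) * b m)
    (hinf : ∃ c > (0 : ℝ), ∀ n : ℕ, 2 ≤ n → c ≤ ((n : ℝ) * Real.log n) * b n) :
    ∀ S : Set ℕ, (∀ n ∈ S, 1 ≤ n) → Summable (fun n : S => b n) →
      Tendsto
        (fun n : ℕ =>
          (1 / Real.log n) * ∑ k ∈ Finset.Icc 1 n, (if k ∈ S then ((k : ℝ))⁻¹ else 0))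
        atTop (𝓝 0) := by
  obtain ⟨c, hc, hcb⟩ := hinf
  intro S _ hsum
  set H : ℕ → ℝ := fun n => ∑ k ∈ Finset.Icc 1 n, (if k ∈ S then (k : ℝ)⁻¹ else 0)
  refine tendsto_one_div_log_mul_nhds_zero
    (fun n => Finset.sum_nonneg fun k _ => by positivity) fun ε hε => ?_
  obtain ⟨m, hm⟩ := (summable_subtype_iff_indicator.1 hsum).exists_forall_norm_sum_Ioc_lt
    (mul_pos hc hε)
  refine ⟨H m, ?_⟩
  filter_upwards [eventually_ge_atTop (max m 2)] with n hn
  calc H n = H m + ∑ k ∈ Finset.Ioc m n, (if k ∈ S then (k : ℝ)⁻¹ else 0) := by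
        have hIcc (j : ℕ) : Finset.Icc 1 j = Finset.Ioc 0 j := Finset.Icc_add_one_left_eq_Ioc 0 j
        simp only [H, hIcc]
        exact (Finset.sum_Ioc_consecutive _ m.zero_le (le_of_max_le_left hn)).symm
    _ ≤ H m + Real.log n / c * (c * ε) := by
        grw [sum_Ioc_ite_inv_le hanti hc hcb S m (le_of_max_le_right hn),
          Real.le_norm_self (∑ k ∈ Finset.Ioc m n, S.indicator b k), hm n]
    _ = H m + ε * Real.log n := by field_simp

/-- If `(b n)` is a sequence of positive reals such that `(n * b n)` is
nonincreasing (for `n ≥ 1`) and `inf_n (n * log n) * b n > 0`, then every set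
`S` of positive integers with `∑_{n ∈ S} b n < ∞` has zero harmonic density. -/
theorem zero_harmonic_density_of_summable_subseries (b : ℕ → ℝ)
    (hb : ∀ n, 0 < b n)
    (hanti : ∀ m n : ℕ, 1 ≤ m → m ≤ n → (n : ℝ) * b n ≤ (m : ℝ) * b m)
    (hinf : ∃ c > (0 : ℝ), ∀ n : ℕ, 2 ≤ n → c ≤ ((n : ℝ) * Real.log n) * b n) :
    ∀ S : Set ℕ, (∀ n ∈ S, 1 ≤ n) → Summable (fun n : S => b n) →
      Tendsto
        (fun n : ℕ =>
          (1 / Real.log n) * ∑ k ∈ Finset.Icc 1 n, (if k ∈ S then ((k : ℝ))⁻¹ else 0))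
        atTop (𝓝 0) :=
  zero_harmonic_density_of_summable_subseries_general b hanti hinf
end

section
/- If (aₙ)ₙ≥1 is a sequence of positive real numbers such that the series ∑ aₙ converges, then the sequence ((n·ln n)·aₙ)ₙ converges in harmonic density to 0. -/
/-!
If `k log k · a_k ≥ ε` then `1/(k log k) ≤ a_k / ε`, so the indices `k` of the exceptional set
satisfy `∑ 1/(k log k) < ∞`. For any nonnegative `g` with `∑ g_k / log k < ∞`, the terms of
`(1 / log n) ∑_{k ≤ n} g_k` are dominated by `g_k / log k` (as `log k ≤ log n`) and tend to `0`
one by one, so the whole expression tends to `0` by dominated convergence for series.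
-/

open Filter Topology

theorem inv_le_div_of_le_mul {t a ε : ℝ} (ha : 0 < a) (hε : 0 < ε) (h : ε ≤ t * a) :
    t⁻¹ ≤ a / ε := by
  have ht : 0 < t := pos_of_mul_pos_left (hε.trans_le h) ha.le
  rw [inv_le_iff_one_le_mul₀ ht, div_mul_eq_mul_div, one_le_div hε, mul_comm]
  exact h

theorem tendsto_inv_log_mul_sum_Icc_of_summable_div_log {g : ℕ → ℝ} (hg : ∀ k, 0 ≤ g k)
    (hsum : Summable fun k : ℕ => g k / Real.log k) :
    Tendsto (fun n : ℕ => (1 / Real.log n) * ∑ k ∈ Finset.Icc 1 n, g k) atTop (𝓝 0) := by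
  let F (n k : ℕ) : ℝ := if k ∈ Finset.Icc 1 n then g k / Real.log n else 0
  have hF : ∀ n : ℕ, (1 / Real.log n) * ∑ k ∈ Finset.Icc 1 n, g k = ∑' k, F n k := fun n => by
    rw [tsum_eq_sum (s := Finset.Icc 1 n) fun k hk => if_neg hk, Finset.mul_sum]
    exact Finset.sum_congr rfl fun k hk => by rw [if_pos hk, one_div_mul_eq_div]
  have hlog : Tendsto (fun n : ℕ => Real.log n) atTop atTop :=
    Real.tendsto_log_atTop.comp tendsto_natCast_atTop_atTop
  -- `g 1 / log 1 = 0`, so the term `k = 1` needs its own bound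
  let bound := Function.update (fun k : ℕ => g k / Real.log k) 1 (g 1)
  have hbound_nonneg : ∀ k, 0 ≤ bound k := fun k => by
    rcases eq_or_ne k 1 with rfl | hk
    · simp [bound, hg]
    · simpa [bound, hk] using div_nonneg (hg k) (Real.log_natCast_nonneg k)
  have hF_nonneg : ∀ n k, 0 ≤ F n k := fun n k => by
    by_cases hk : k ∈ Finset.Icc 1 n
    · exact (if_pos hk).trans_ge (div_nonneg (hg k) (Real.log_natCast_nonneg n))
    · exact (if_neg hk).ge
  have hF_le : ∀ᶠ n in atTop, ∀ k, ‖F n k‖ ≤ bound k := by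
    filter_upwards [hlog.eventually_ge_atTop 1] with n hn k
    rw [Real.norm_of_nonneg (hF_nonneg n k)]
    by_cases hk : k ∈ Finset.Icc 1 n
    · obtain ⟨hk1, hkn⟩ := Finset.mem_Icc.mp hk
      simp only [F, if_pos hk]
      rcases eq_or_ne k 1 with rfl | hk1'
      · simpa [bound] using div_le_self (hg 1) hn
      · have hk2 : (1 : ℝ) < k := by exact_mod_cast (by omega : 1 < k)
        simp only [bound, Function.update_of_ne hk1']
        exact div_le_div_of_nonneg_left (hg k) (Real.log_pos hk2)
          (Real.log_le_log (by linarith) (by exact_mod_cast hkn))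
    · exact (if_neg hk).trans_le (hbound_nonneg k)
  have hF_lim : ∀ k, Tendsto (F · k) atTop (𝓝 0) := fun k => by
    refine squeeze_zero (hF_nonneg · k) (fun n => ?_)
      ((tendsto_const_nhds (x := g k)).div_atTop hlog)
    by_cases hk : k ∈ Finset.Icc 1 n
    · exact (if_pos hk).le
    · exact (if_neg hk).trans_le (div_nonneg (hg k) (Real.log_natCast_nonneg n))
  simpa only [hF, tsum_zero] using
    tendsto_tsum_of_dominated_convergence (hsum.update 1 (g 1)) hF_lim hF_le

/-- If `∑ a n` is a convergent positive series, then `((n * log n) * a n)`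
converges in harmonic density to `0`: for every `ε > 0`, the set of indices `k`
with `(k * log k) * a k ≥ ε` has zero harmonic density. -/
theorem salat_toma_harmonic (a : ℕ → ℝ) (ha : ∀ n, 0 < a n)
    (hsum : Summable a) :
    ∀ ε > (0 : ℝ),
      Tendsto
        (fun n : ℕ =>
          (1 / Real.log n) *
            ∑ k ∈ Finset.Icc 1 n,
              (if ε ≤ ((k : ℝ) * Real.log k) * a k then ((k : ℝ))⁻¹ else 0))
        atTop (𝓝 0) := by
  intro ε hε
  have hterm_nonneg (k : ℕ) : 0 ≤ if ε ≤ ((k : ℝ) * Real.log k) * a k then ((k : ℝ))⁻¹ else 0 := by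
    split_ifs <;> positivity
  refine tendsto_inv_log_mul_sum_Icc_of_summable_div_log hterm_nonneg ?_
  refine (hsum.div_const ε).of_nonneg_of_le
    (fun k => div_nonneg (hterm_nonneg k) (Real.log_natCast_nonneg k)) (fun k => ?_)
  split_ifs with h
  · rw [div_eq_mul_inv, ← mul_inv]
    exact inv_le_div_of_le_mul (ha k) hε h
  · rw [zero_div]
    exact (div_pos (ha k) hε).le
end

section
/- If (aₙ)ₙ≥1 is a sequence of positive real numbers such that the series ∑ aₙ converges, and φ : ℕ → ℕ is a bijection, then the sequence (n·a_{φ(n)})ₙ converges in density to 0. -/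
/-!
Fix `ε > 0` and a finite set `F` of indices. Among the `k ≤ n` with `ε ≤ k · a (φ k)`, at most `#F`
have `φ k ∈ F`, by injectivity of `φ`; every other one has `a (φ k) ≥ ε / n`, with the indices `φ k`
distinct and outside `F`, so there are at most `n / ε` times the tail `∑_{i ∉ F} a i` of them. Hence
the density is at most `#F / n + (∑_{i ∉ F} a i) / ε`, and the tail of a convergent series can be
made arbitrarily small.
-/

open Filter Topology Finset

section CountingBounds

variable {ι κ : Type*} {f : ι → ℝ} {g : κ → ι} {s : Finset κ} {c : ℝ}

theorem Finset.card_mul_le_tsum_of_injOn (hf : ∀ i, 0 ≤ f i) (hsum : Summable f)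
    (hg : Set.InjOn g s) (hc : ∀ k ∈ s, c ≤ f (g k)) :
    (#s : ℝ) * c ≤ ∑' i, f i := by
  classical
  calc (#s : ℝ) * c ≤ ∑ k ∈ s, f (g k) := by
        simpa [nsmul_eq_mul] using card_nsmul_le_sum s (fun k => f (g k)) c hc
    _ = ∑ i ∈ s.image g, f i := (sum_image hg).symm
    _ ≤ ∑' i, f i := hsum.sum_le_tsum _ fun i _ => hf i

theorem Finset.card_le_card_add_tsum_compl_div (hf : ∀ i, 0 ≤ f i) (hsum : Summable f)
    (hg : Set.InjOn g s) (hc0 : 0 < c) (hc : ∀ k ∈ s, c ≤ f (g k)) (F : Finset ι) :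
    (#s : ℝ) ≤ #F + (∑' i : {i // i ∉ F}, f i) / c := by
  classical
  have hin : (#(s.filter fun k => g k ∈ F) : ℝ) ≤ #F := by
    exact_mod_cast card_le_card_of_injOn g (fun k hk => (mem_filter.1 hk).2)
      (hg.mono (filter_subset _ _))
  have hout : (#(s.filter fun k => g k ∉ F) : ℝ) ≤ (∑' i : {i // i ∉ F}, f i) / c := by
    rw [le_div_iff₀ hc0]
    refine (card_mul_le_tsum_of_injOn (fun i => ?_) (hsum.indicator _)
      (hg.mono (filter_subset _ _)) fun k hk => ?_).trans_eq
      (_root_.tsum_subtype (F : Set ι)ᶜ f).symm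
    · exact Set.indicator_nonneg (fun i _ => hf i) i
    · obtain ⟨hks, hkF⟩ := mem_filter.1 hk
      rw [Set.indicator_of_mem (by simpa using hkF)]
      exact hc k hks
  rw [← card_filter_add_card_filter_not (s := s) fun k => g k ∈ F, Nat.cast_add]
  exact add_le_add hin hout

end CountingBounds

theorem density_le_card_div_add_tsum_compl_div {a : ℕ → ℝ} (ha : ∀ i, 0 ≤ a i)
    (hsum : Summable a) {φ : ℕ → ℕ} (hφ : φ.Injective) {ε : ℝ} (hε : 0 < ε) {n : ℕ} (hn : 0 < n)
    (F : Finset ℕ) :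
    (#((Icc 1 n).filter fun k : ℕ => ε ≤ (k : ℝ) * a (φ k)) : ℝ) / n ≤
      #F / n + (∑' i : {i // i ∉ F}, a i) / ε := by
  have hn' : (0 : ℝ) < n := by exact_mod_cast hn
  have hlarge : ∀ k ∈ (Icc 1 n).filter (fun k : ℕ => ε ≤ (k : ℝ) * a (φ k)), ε / n ≤ a (φ k) := by
    intro k hk
    obtain ⟨hkIcc, hεk⟩ := mem_filter.1 hk
    have hkn : (k : ℝ) ≤ n := by exact_mod_cast (mem_Icc.1 hkIcc).2
    rw [div_le_iff₀ hn', mul_comm]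
    exact hεk.trans (mul_le_mul_of_nonneg_right hkn (ha _))
  have hcount := card_le_card_add_tsum_compl_div ha hsum hφ.injOn (div_pos hε hn') hlarge F
  rw [div_div_eq_mul_div] at hcount
  rw [div_le_iff₀ hn', add_mul, div_mul_cancel₀ _ hn'.ne', div_mul_eq_mul_div]
  exact hcount

/-- If `∑ a n` is a convergent positive series and `φ : ℕ → ℕ` is a bijection,
then `(n * a (φ n))` converges in density to `0`. -/
theorem salat_toma_rearrangement (a : ℕ → ℝ) (φ : ℕ → ℕ)
    (ha : ∀ n, 0 < a n) (hsum : Summable a) (hφ : Function.Bijective φ) :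
    ∀ ε > (0 : ℝ),
      Tendsto
        (fun n : ℕ =>
          (((Finset.Icc 1 n).filter (fun k : ℕ => ε ≤ (k : ℝ) * a (φ k))).card : ℝ) / n)
        atTop (𝓝 0) := by
  intro ε hε
  refine tendsto_order.2 ⟨fun y hy => Eventually.of_forall fun n => hy.trans_le (by positivity),
    fun δ hδ => ?_⟩
  obtain ⟨F, hF⟩ := ((tendsto_tsum_compl_atTop_zero a).eventually
    (gt_mem_nhds (by positivity : 0 < ε * δ / 2))).exists
  have hFn := (tendsto_const_div_atTop_nhds_zero_nat (#F : ℝ)).eventually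
    (gt_mem_nhds (half_pos hδ))
  filter_upwards [hFn, eventually_gt_atTop 0] with n hFn hn
  have htail : (∑' i : {i // i ∉ F}, a i) / ε < δ / 2 := by
    rw [div_lt_iff₀ hε]
    linarith
  calc _ ≤ #F / n + (∑' i : {i // i ∉ F}, a i) / ε :=
        density_le_card_div_add_tsum_compl_div (fun i => (ha i).le) hsum hφ.injective hε hn F
    _ < δ := by linarith
end
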